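/- arXiv:1505.06344 — 3 statements merged into one kernel-verified Lean document; each statement's English description precedes it below -/
import Mathlib

section
/- For a positive definite symmetric matrix R ∈ ℝ^{n×n}, integers a ≤ b with ℓ = b - a + 1, and any sequence u : ℤ[a,b] → ℝ^n, the double-summation Jensen inequality holds: ∑_{k=a}^{b} ∑_{s=a}^{k} u_s^T R u_s ≥ (2/(ℓ(ℓ+1))) (∑_{k=a}^{b} ∑_{s=a}^{k} u_s)^T R (∑_{k=a}^{b} ∑_{s=a}^{k} u_s). -/
/-!
Writing `q x = xᵀ R x`, positive semidefiniteness of `R` gives `2 xᵀ R y ≤ q x + q y` (expand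
`q (x - y) ≥ 0`). Summing this over all pairs of a family of `N` vectors yields the discrete Jensen
inequality `q (∑ vᵢ) ≤ N ∑ q vᵢ`. The double sum over `a ≤ s ≤ k ≤ b` is a single sum over
`ℓ (ℓ + 1) / 2` index pairs, which is exactly the constant in the statement.
-/

open Finset Matrix

namespace Matrix.PosSemidef

variable {m ι : Type*} [Fintype m] {R : Matrix m m ℝ}

theorem dotProduct_mulVec_comm (hR : R.PosSemidef) (x y : m → ℝ) :
    y ⬝ᵥ R *ᵥ x = x ⬝ᵥ R *ᵥ y := by
  have hT : Rᵀ = R := by simpa [conjTranspose_eq_transpose_of_trivial] using hR.isHermitian.eq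
  rw [dotProduct_mulVec, ← mulVec_transpose, hT, dotProduct_comm]

theorem two_mul_dotProduct_mulVec_le (hR : R.PosSemidef) (x y : m → ℝ) :
    2 * (x ⬝ᵥ R *ᵥ y) ≤ x ⬝ᵥ R *ᵥ x + y ⬝ᵥ R *ᵥ y := by
  have hdiff := hR.dotProduct_mulVec_nonneg (x - y)
  simp only [star_trivial, mulVec_sub, sub_dotProduct, dotProduct_sub] at hdiff
  linarith [hR.dotProduct_mulVec_comm x y]

theorem dotProduct_mulVec_sum_le (hR : R.PosSemidef) (t : Finset ι) (v : ι → m → ℝ) :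
    (∑ i ∈ t, v i) ⬝ᵥ R *ᵥ (∑ i ∈ t, v i) ≤ #t * ∑ i ∈ t, v i ⬝ᵥ R *ᵥ v i := by
  have hexpand : (∑ i ∈ t, v i) ⬝ᵥ R *ᵥ (∑ i ∈ t, v i) =
      ∑ i ∈ t, ∑ j ∈ t, v i ⬝ᵥ R *ᵥ v j := by
    simp only [mulVec_sum, sum_dotProduct, dotProduct_sum]
    exact sum_comm
  have hpairs : ∑ i ∈ t, ∑ j ∈ t, 2 * (v i ⬝ᵥ R *ᵥ v j) ≤
      ∑ i ∈ t, ∑ j ∈ t, (v i ⬝ᵥ R *ᵥ v i + v j ⬝ᵥ R *ᵥ v j) :=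
    sum_le_sum fun i _ ↦ sum_le_sum fun j _ ↦ hR.two_mul_dotProduct_mulVec_le (v i) (v j)
  simp only [← mul_sum, sum_add_distrib, sum_const, nsmul_eq_mul] at hpairs
  linarith

end Matrix.PosSemidef

theorem Int.sum_card_Icc_Icc {a b : ℤ} (hab : a ≤ b) :
    ∑ k ∈ Icc a b, (#(Icc a k) : ℝ) = ((b : ℝ) - a + 1) * ((b - a + 1) + 1) / 2 := by
  induction b, hab using Int.leInduction with
  | base => simp
  | succ b hb ih =>
    have hcard : (#(Icc a (b + 1)) : ℝ) = (b + 1 : ℤ) + 1 - a := by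
      exact_mod_cast Int.card_Icc_of_le a (b + 1) (by omega)
    rw [← Order.succ_eq_add_one, ← insert_Icc_right_eq_Icc_succ (hb.trans (Order.le_succ b)),
      sum_insert (by simp), ih, Order.succ_eq_add_one, hcard]
    push_cast
    ring

theorem discrete_jensen_double_general
    (n : ℕ) (R : Matrix (Fin n) (Fin n) ℝ) (hR : R.PosDef)
    (a b : ℤ) (hab : a ≤ b) (u : ℤ → (Fin n → ℝ)) :
    ∑ k ∈ Finset.Icc a b, ∑ s ∈ Finset.Icc a k, (u s) ⬝ᵥ R.mulVec (u s) ≥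
      (2 / (((b : ℝ) - a + 1) * ((b - a + 1) + 1))) *
        ((∑ k ∈ Finset.Icc a b, ∑ s ∈ Finset.Icc a k, u s) ⬝ᵥ
          R.mulVec (∑ k ∈ Finset.Icc a b, ∑ s ∈ Finset.Icc a k, u s)) := by
  have hjensen := hR.posSemidef.dotProduct_mulVec_sum_le
    ((Icc a b).sigma fun k ↦ Icc a k) (fun p ↦ u p.2)
  rw [sum_sigma, sum_sigma, card_sigma, Nat.cast_sum, Int.sum_card_Icc_Icc hab] at hjensen
  have hℓ : (0 : ℝ) < b - a + 1 := by
    have : (a : ℝ) ≤ b := by exact_mod_cast hab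
    linarith
  rw [ge_iff_le, div_mul_eq_mul_div, div_le_iff₀ (mul_pos hℓ (by linarith))]
  linarith

theorem discrete_jensen_double
    (n : ℕ) (R : Matrix (Fin n) (Fin n) ℝ) (hR : R.PosDef) (hRsym : R.IsSymm)
    (a b : ℤ) (hab : a ≤ b) (u : ℤ → (Fin n → ℝ)) :
    ∑ k ∈ Finset.Icc a b, ∑ s ∈ Finset.Icc a k, (u s) ⬝ᵥ R.mulVec (u s) ≥
      (2 / (((b : ℝ) - a + 1) * ((b - a + 1) + 1))) *
        ((∑ k ∈ Finset.Icc a b, ∑ s ∈ Finset.Icc a k, u s) ⬝ᵥ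
          R.mulVec (∑ k ∈ Finset.Icc a b, ∑ s ∈ Finset.Icc a k, u s)) :=
  discrete_jensen_double_general n R hR a b hab u
end

section
/- Let R₁ ∈ ℝ^{n×n} and R₂ ∈ ℝ^{m×m} be symmetric positive definite and X ∈ ℝ^{n×m} be such that the block matrix [[R₁, X],[Xᵀ, R₂]] is positive semidefinite. Then for every α ∈ (0,1), the block-diagonal matrix diag((1/α)R₁, (1/(1-α))R₂) minus [[R₁, X],[Xᵀ, R₂]] is positive semidefinite. -/
/-!
With `t = (1 - α) / α`, the difference is `[[t R₁, -X], [-Xᵀ, t⁻¹ R₂]]`, which is the congruence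
`Dᴴ M D` of the block matrix `M = [[R₁, X], [Xᵀ, R₂]]` by `D = diag(√t • 1, -(√t)⁻¹ • 1)`.
-/

open Matrix

namespace Matrix.PosSemidef

variable {m n : Type*} [Fintype m] [Fintype n] [DecidableEq m] [DecidableEq n]

theorem fromBlocks_star_mul_smul {R : Type*} [CommRing R] [PartialOrder R] [StarRing R]
    {A : Matrix m m R} {B : Matrix m n R} {C : Matrix n m R} {D : Matrix n n R}
    (h : (fromBlocks A B C D).PosSemidef) (a b : R) :
    (fromBlocks ((star a * a) • A) ((star a * b) • B) ((star b * a) • C)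
      ((star b * b) • D)).PosSemidef := by
  convert h.conjTranspose_mul_mul_same
    (fromBlocks (a • (1 : Matrix m m R)) 0 0 (b • (1 : Matrix n n R))) using 1
  simp [fromBlocks_conjTranspose, fromBlocks_multiply, smul_smul, mul_comm]

theorem fromBlocks_smul_neg_neg_inv_smul
    {A : Matrix m m ℝ} {B : Matrix m n ℝ} {C : Matrix n m ℝ} {D : Matrix n n ℝ}
    (h : (fromBlocks A B C D).PosSemidef) {t : ℝ} (ht : 0 < t) :
    (fromBlocks (t • A) (-B) (-C) (t⁻¹ • D)).PosSemidef := by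
  have hs : √t ≠ 0 := (Real.sqrt_pos.2 ht).ne'
  simpa [hs, ← mul_inv, Real.mul_self_sqrt ht.le] using
    h.fromBlocks_star_mul_smul √t (-(√t)⁻¹)

end Matrix.PosSemidef

theorem reciprocally_convex_combination_general
    (n m : ℕ) (R₁ : Matrix (Fin n) (Fin n) ℝ) (R₂ : Matrix (Fin m) (Fin m) ℝ)
    (X : Matrix (Fin n) (Fin m) ℝ)
    (hblock : (Matrix.fromBlocks R₁ X Xᵀ R₂).PosSemidef)
    (α : ℝ) (hα0 : 0 < α) (hα1 : α < 1) :
    (Matrix.fromBlocks ((1 / α) • R₁) 0 0 ((1 / (1 - α)) • R₂) -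
      Matrix.fromBlocks R₁ X Xᵀ R₂).PosSemidef := by
  have h1α : 0 < 1 - α := sub_pos.2 hα1
  have e₁ : 1 / α - 1 = (1 - α) / α := by field_simp
  have e₂ : 1 / (1 - α) - 1 = ((1 - α) / α)⁻¹ := by field_simp; ring
  convert hblock.fromBlocks_smul_neg_neg_inv_smul (div_pos h1α hα0) using 1
  rw [← e₂, ← e₁, sub_smul, sub_smul, one_smul, one_smul]
  ext (i | i) (j | j) <;> simp

theorem reciprocally_convex_combination
    (n m : ℕ) (R₁ : Matrix (Fin n) (Fin n) ℝ) (R₂ : Matrix (Fin m) (Fin m) ℝ)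
    (X : Matrix (Fin n) (Fin m) ℝ)
    (hR₁ : R₁.PosDef) (hR₁s : R₁.IsSymm) (hR₂ : R₂.PosDef) (hR₂s : R₂.IsSymm)
    (hblock : (Matrix.fromBlocks R₁ X Xᵀ R₂).PosSemidef)
    (α : ℝ) (hα0 : 0 < α) (hα1 : α < 1) :
    (Matrix.fromBlocks ((1 / α) • R₁) 0 0 ((1 / (1 - α)) • R₂) -
      Matrix.fromBlocks R₁ X Xᵀ R₂).PosSemidef :=
  reciprocally_convex_combination_general n m R₁ R₂ X hblock α hα0 hα1
end

section
/- (Single-sum refined Jensen inequality, Lemma 3.1) Let R ∈ ℝ^{n×n} be symmetric positive definite, a < b integers, ℓ = b - a + 1, and u : ℤ[a,b] → ℝ^n. Define υ₁ = ∑_{k=a}^{b} u_k, υ₂ = ∑_{k=a}^{b} ∑_{s=a}^{k} u_s, υ₃ = ∑_{k=a}^{b} ∑_{s=a}^{k} ∑_{i=a}^{s} u_i, ζ₁ = υ₁ - (2/(ℓ+1))υ₂, and ζ₂ = υ₁ - (6/(ℓ+1))υ₂ + (12/((ℓ+1)(ℓ+2)))υ₃. Then ∑_{k=a}^{b} u_k^T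 R u_k - (1/ℓ) υ₁^T R υ₁ ≥ (3(ℓ+1)/(ℓ(ℓ-1))) ζ₁^T R ζ₁ + (5(ℓ+1)(ℓ+2)²/(ℓ(ℓ-1)(ℓ²+11))) ζ₂^T R ζ₂, provided ℓ > 1. -/
/-!
The inequality is Bessel's inequality for the positive semidefinite form `(x, y) ↦ xᵀ R y`,
applied to the family `(u k)_{k ∈ ℤ[a,b]}` and the weights `1`, `P`, `Q` given by the discrete
Legendre polynomials of degrees `0, 1, 2` on `ℤ[a,b]`, which are orthogonal for the counting
measure. Exchanging the order of summation gives `∑ P k • u k = (ℓ + 1) • ζ₁` and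
`∑ Q k • u k = (ℓ + 1)(ℓ + 2) • ζ₂`, while `∑ P² = ℓ(ℓ² - 1)/3` and
`∑ Q² = ℓ(ℓ² - 1)(ℓ² - 4)/5`, so Bessel's inequality even gives the claim with `ℓ² - 4` in
place of `ℓ² + 11`.
-/

open Finset Matrix

namespace LinearMap.BilinForm

variable {V ι κ : Type*} [AddCommGroup V] [Module ℝ V] [Fintype κ]

theorem sum_apply_div_le_sum_apply (B : LinearMap.BilinForm ℝ V) (hB : ∀ x, 0 ≤ B x x)
    (s : Finset ι) (u : ι → V) (w : κ → ι → ℝ)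
    (hw : Pairwise fun i j => ∑ k ∈ s, w i k * w j k = 0) :
    ∑ j, B (∑ k ∈ s, w j k • u k) (∑ k ∈ s, w j k • u k) / ∑ k ∈ s, w j k ^ 2 ≤
      ∑ k ∈ s, B (u k) (u k) := by
  set c : κ → V := fun j => ∑ k ∈ s, w j k • u k
  set N : κ → ℝ := fun j => ∑ k ∈ s, w j k ^ 2 with hN
  set d : κ → V := fun j => (N j)⁻¹ • c j
  set y : ι → V := fun k => ∑ j, w j k • d j
  -- `y` is the projection of `u` onto the span of the weight families; the claim is
  -- `0 ≤ ∑ k ∈ s, B (u k - y k) (u k - y k)`, expanded.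
  have hswap_left : ∀ v : ι → V,
      ∑ k ∈ s, B (y k) (v k) = ∑ j, B (d j) (∑ k ∈ s, w j k • v k) := by
    intro v
    simp only [y, map_sum, map_smul, LinearMap.sum_apply, LinearMap.smul_apply, smul_eq_mul]
    exact sum_comm
  have hswap_right : ∑ k ∈ s, B (u k) (y k) = ∑ j, B (c j) (d j) := by
    simp only [y, c, map_sum, map_smul, LinearMap.sum_apply, LinearMap.smul_apply, smul_eq_mul]
    exact sum_comm
  have hwy : ∀ j, ∑ k ∈ s, w j k • y k = N j • d j := by
    intro j
    simp only [y, smul_sum, smul_smul]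
    rw [sum_comm, sum_eq_single j]
    · simp only [hN, ← sum_smul, sq]
    · intro i _ hij
      rw [← sum_smul, sum_congr rfl fun k _ => mul_comm _ _, hw hij, zero_smul]
    · simp
  have hcd : ∀ j, B (c j) (d j) = B (c j) (c j) / N j := by
    intro j; simp only [d, map_smul, smul_eq_mul]; ring
  have hdc : ∀ j, B (d j) (∑ k ∈ s, w j k • u k) = B (c j) (c j) / N j := by
    intro j; simp only [d, map_smul, LinearMap.smul_apply, smul_eq_mul]; ring
  have hdd : ∀ j, B (d j) (N j • d j) = B (c j) (c j) / N j := by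
    intro j
    rcases eq_or_ne (N j) 0 with h | h
    · simp [h]
    · simp only [d, map_smul, LinearMap.smul_apply, smul_eq_mul]; field_simp
  have hnonneg : 0 ≤ ∑ k ∈ s, B (u k - y k) (u k - y k) := sum_nonneg fun k _ => hB _
  simp only [map_sub, LinearMap.sub_apply, sum_sub_distrib, hswap_left, hswap_right, hwy, hcd,
    hdc, hdd] at hnonneg
  change ∑ j, B (c j) (c j) / N j ≤ _
  linarith

theorem sum_apply_div_le_sum_apply_of_le (B : LinearMap.BilinForm ℝ V) (hB : ∀ x, 0 ≤ B x x)
    (s : Finset ι) (u : ι → V) (w : κ → ι → ℝ)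
    (hw : Pairwise fun i j => ∑ k ∈ s, w i k * w j k = 0) (D : κ → ℝ)
    (hwD : ∀ j, ∑ k ∈ s, w j k ^ 2 ≤ D j) :
    ∑ j, B (∑ k ∈ s, w j k • u k) (∑ k ∈ s, w j k • u k) / D j ≤ ∑ k ∈ s, B (u k) (u k) := by
  refine le_trans (sum_le_sum fun j _ => ?_) (B.sum_apply_div_le_sum_apply hB s u w hw)
  -- a weight of norm `0` vanishes, and then both sides are `0`
  rcases (sum_nonneg fun k _ => sq_nonneg (w j k)).eq_or_lt' with hN | hN
  · have hw0 : ∀ k ∈ s, w j k = 0 := fun k hk => by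
      simpa using (sum_eq_zero_iff_of_nonneg fun k _ => sq_nonneg (w j k)).mp hN k hk
    have hc0 : ∑ k ∈ s, w j k • u k = 0 := sum_eq_zero fun k hk => by rw [hw0 k hk, zero_smul]
    simp [hc0]
  · exact div_le_div_of_nonneg_left (hB _) hN (hwD j)

end LinearMap.BilinForm

theorem Int.cast_card_Icc {a b : ℤ} (hab : a ≤ b + 1) : ((Icc a b).card : ℝ) = b - a + 1 := by
  rw [Int.card_Icc, ← Int.cast_natCast, Int.toNat_of_nonneg (by omega)]
  push_cast; ring

theorem Finset.sum_range_quartic (N : ℕ) (c₀ c₁ c₂ c₃ c₄ : ℝ) :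
    ∑ m ∈ range N, (c₄ * (m : ℝ) ^ 4 + c₃ * (m : ℝ) ^ 3 + c₂ * (m : ℝ) ^ 2 + c₁ * m + c₀) =
      c₄ * (N * (N - 1) * (2 * N - 1) * (3 * N ^ 2 - 3 * N - 1) / 30) +
        c₃ * (N ^ 2 * (N - 1) ^ 2 / 4) + c₂ * (N * (N - 1) * (2 * N - 1) / 6) +
        c₁ * (N * (N - 1) / 2) + c₀ * N := by
  induction N with
  | zero => simp
  | succ N ih => rw [sum_range_succ, ih]; push_cast; ring

theorem Finset.sum_Icc_quartic {a b : ℤ} (hab : a ≤ b + 1) {N : ℝ} (hN : N = b - a + 1)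
    (c₀ c₁ c₂ c₃ c₄ : ℝ) :
    ∑ k ∈ Icc a b, (c₄ * ((k : ℝ) - a) ^ 4 + c₃ * ((k : ℝ) - a) ^ 3 + c₂ * ((k : ℝ) - a) ^ 2 +
        c₁ * ((k : ℝ) - a) + c₀) =
      c₄ * (N * (N - 1) * (2 * N - 1) * (3 * N ^ 2 - 3 * N - 1) / 30) +
        c₃ * (N ^ 2 * (N - 1) ^ 2 / 4) + c₂ * (N * (N - 1) * (2 * N - 1) / 6) +
        c₁ * (N * (N - 1) / 2) + c₀ * N := by
  have hcard : ((b + 1 - a).toNat : ℝ) = N := by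
    rw [← Int.card_Icc, Int.cast_card_Icc hab, hN]
  rw [Int.Icc_eq_finset_map, sum_map, ← hcard, ← sum_range_quartic]
  refine sum_congr rfl fun m _ => ?_
  simp

theorem Finset.sum_Icc_sum_Icc_comm {M : Type*} [AddCommMonoid M] (a b : ℤ) (f : ℤ → ℤ → M) :
    ∑ k ∈ Icc a b, ∑ s ∈ Icc a k, f k s = ∑ s ∈ Icc a b, ∑ k ∈ Icc s b, f k s :=
  sum_comm' fun k s => by simp only [mem_Icc]; omega

section

variable {V : Type*} [AddCommGroup V] [Module ℝ V]

theorem Finset.sum_Icc_sum_Icc_eq_sum_smul (a b : ℤ) (f : ℤ → V) :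
    ∑ k ∈ Icc a b, ∑ s ∈ Icc a k, f s = ∑ s ∈ Icc a b, ((b : ℝ) - s + 1) • f s := by
  rw [sum_Icc_sum_Icc_comm]
  refine sum_congr rfl fun s hs => ?_
  rw [sum_const, ← Nat.cast_smul_eq_nsmul ℝ, Int.cast_card_Icc (by simp at hs; omega)]

theorem Finset.sum_Icc_sum_Icc_sum_Icc_eq_sum_smul (a b : ℤ) (f : ℤ → V) :
    ∑ k ∈ Icc a b, ∑ s ∈ Icc a k, ∑ i ∈ Icc a s, f i =
      ∑ i ∈ Icc a b, (((b : ℝ) - i + 1) * ((b : ℝ) - i + 2) / 2) • f i := by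
  simp only [sum_Icc_sum_Icc_eq_sum_smul]
  rw [sum_Icc_sum_Icc_comm]
  refine sum_congr rfl fun i hi => ?_
  rw [← sum_smul]
  congr 1
  convert sum_Icc_quartic (a := i) (b := b) (by simp at hi; omega) rfl 1 1 0 0 0 using 1
  · exact sum_congr rfl fun k _ => by ring
  · ring

end

/- Discrete Legendre polynomials of degrees 1 and 2 on `ℤ[a,b]`, unnormalised: together with the
constant `1` they are orthogonal for the counting measure on `ℤ[a,b]`. -/
noncomputable def legendre₁ (a b k : ℤ) : ℝ := 2 * k - a - b

noncomputable def legendre₂ (a b k : ℤ) : ℝ :=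
  (3 * legendre₁ a b k ^ 2 - (((b : ℝ) - a + 1) ^ 2 - 1)) / 2

section legendre

variable {a b : ℤ} {ℓ : ℝ}

theorem sum_legendre₁ (hab : a ≤ b + 1) (hℓ : ℓ = b - a + 1) :
    ∑ k ∈ Icc a b, legendre₁ a b k = 0 := by
  convert sum_Icc_quartic hab rfl (-(ℓ - 1)) 2 0 0 0 using 1
  · exact sum_congr rfl fun k _ => by rw [legendre₁, hℓ]; ring
  · rw [hℓ]; ring

theorem sum_legendre₁_sq (hab : a ≤ b + 1) (hℓ : ℓ = b - a + 1) :
    ∑ k ∈ Icc a b, legendre₁ a b k ^ 2 = ℓ * (ℓ ^ 2 - 1) / 3 := by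
  convert sum_Icc_quartic hab rfl ((ℓ - 1) ^ 2) (-4 * (ℓ - 1)) 4 0 0 using 1
  · exact sum_congr rfl fun k _ => by rw [legendre₁, hℓ]; ring
  · rw [hℓ]; ring

theorem sum_legendre₁_pow_three (hab : a ≤ b + 1) (hℓ : ℓ = b - a + 1) :
    ∑ k ∈ Icc a b, legendre₁ a b k ^ 3 = 0 := by
  convert sum_Icc_quartic hab rfl (-(ℓ - 1) ^ 3) (6 * (ℓ - 1) ^ 2) (-12 * (ℓ - 1)) 8 0 using 1
  · exact sum_congr rfl fun k _ => by rw [legendre₁, hℓ]; ring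
  · rw [hℓ]; ring

theorem sum_legendre₁_pow_four (hab : a ≤ b + 1) (hℓ : ℓ = b - a + 1) :
    ∑ k ∈ Icc a b, legendre₁ a b k ^ 4 = ℓ * (ℓ ^ 2 - 1) * (3 * ℓ ^ 2 - 7) / 15 := by
  convert sum_Icc_quartic hab rfl ((ℓ - 1) ^ 4) (-8 * (ℓ - 1) ^ 3) (24 * (ℓ - 1) ^ 2)
    (-32 * (ℓ - 1)) 16 using 1
  · exact sum_congr rfl fun k _ => by rw [legendre₁, hℓ]; ring
  · rw [hℓ]; ring

theorem sum_legendre₂ (hab : a ≤ b + 1) (hℓ : ℓ = b - a + 1) :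
    ∑ k ∈ Icc a b, legendre₂ a b k = 0 := by
  simp only [legendre₂, ← sum_div, sum_sub_distrib, ← mul_sum, sum_legendre₁_sq hab hℓ,
    sum_const, nsmul_eq_mul, Int.cast_card_Icc hab, ← hℓ]
  ring

theorem sum_legendre₁_mul_legendre₂ (hab : a ≤ b + 1) (hℓ : ℓ = b - a + 1) :
    ∑ k ∈ Icc a b, legendre₁ a b k * legendre₂ a b k = 0 := by
  have hexp : ∀ k, legendre₁ a b k * legendre₂ a b k =
      (3 * legendre₁ a b k ^ 3 - (ℓ ^ 2 - 1) * legendre₁ a b k) / 2 := fun k => by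
    rw [legendre₂, hℓ]; ring
  simp only [hexp, ← sum_div, sum_sub_distrib, ← mul_sum, sum_legendre₁_pow_three hab hℓ,
    sum_legendre₁ hab hℓ]
  ring

theorem sum_legendre₂_sq (hab : a ≤ b + 1) (hℓ : ℓ = b - a + 1) :
    ∑ k ∈ Icc a b, legendre₂ a b k ^ 2 = ℓ * (ℓ ^ 2 - 1) * (ℓ ^ 2 - 4) / 5 := by
  have hexp : ∀ k, legendre₂ a b k ^ 2 = (9 * legendre₁ a b k ^ 4 -
      6 * (ℓ ^ 2 - 1) * legendre₁ a b k ^ 2 + (ℓ ^ 2 - 1) ^ 2) / 4 := fun k => by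
    rw [legendre₂, hℓ]; ring
  simp only [hexp, ← sum_div, sum_add_distrib, sum_sub_distrib, ← mul_sum,
    sum_legendre₁_pow_four hab hℓ, sum_legendre₁_sq hab hℓ, sum_const, nsmul_eq_mul,
    Int.cast_card_Icc hab, ← hℓ]
  ring

end legendre

section

variable {V : Type*} [AddCommGroup V] [Module ℝ V] {a b : ℤ} {ℓ : ℝ}

theorem sum_legendre₁_smul (hℓ : ℓ = b - a + 1) (u : ℤ → V) :
    ∑ k ∈ Icc a b, legendre₁ a b k • u k =
      (ℓ + 1) • ∑ k ∈ Icc a b, u k - (2 : ℝ) • ∑ k ∈ Icc a b, ∑ s ∈ Icc a k, u s := by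
  rw [sum_Icc_sum_Icc_eq_sum_smul, smul_sum, smul_sum, ← sum_sub_distrib]
  refine sum_congr rfl fun k _ => ?_
  rw [legendre₁, hℓ]
  module

theorem sum_legendre₂_smul (hℓ : ℓ = b - a + 1) (u : ℤ → V) :
    ∑ k ∈ Icc a b, legendre₂ a b k • u k =
      ((ℓ + 1) * (ℓ + 2)) • ∑ k ∈ Icc a b, u k -
        (6 * (ℓ + 2)) • ∑ k ∈ Icc a b, ∑ s ∈ Icc a k, u s +
        (12 : ℝ) • ∑ k ∈ Icc a b, ∑ s ∈ Icc a k, ∑ i ∈ Icc a s, u i := by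
  rw [sum_Icc_sum_Icc_eq_sum_smul, sum_Icc_sum_Icc_sum_Icc_eq_sum_smul, smul_sum, smul_sum,
    smul_sum, ← sum_sub_distrib, ← sum_add_distrib]
  refine sum_congr rfl fun k _ => ?_
  rw [legendre₂, legendre₁, hℓ]
  module

end

theorem LinearMap.BilinForm.sum_legendre_apply_div_le {V : Type*} [AddCommGroup V]
    [Module ℝ V] (B : LinearMap.BilinForm ℝ V) (hB : ∀ x, 0 ≤ B x x) {a b : ℤ} (hab : a ≤ b + 1)
    {ℓ D : ℝ} (hℓ : ℓ = b - a + 1) (hD : ℓ * (ℓ ^ 2 - 1) * (ℓ ^ 2 - 4) / 5 ≤ D) (u : ℤ → V) :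
    B (∑ k ∈ Icc a b, u k) (∑ k ∈ Icc a b, u k) / ℓ +
      B (∑ k ∈ Icc a b, legendre₁ a b k • u k) (∑ k ∈ Icc a b, legendre₁ a b k • u k) /
        (ℓ * (ℓ ^ 2 - 1) / 3) +
      B (∑ k ∈ Icc a b, legendre₂ a b k • u k) (∑ k ∈ Icc a b, legendre₂ a b k • u k) / D ≤
      ∑ k ∈ Icc a b, B (u k) (u k) := by
  have h := B.sum_apply_div_le_sum_apply_of_le hB (Icc a b) u
    ![fun _ => 1, legendre₁ a b, legendre₂ a b] ?_ ![ℓ, ℓ * (ℓ ^ 2 - 1) / 3, D] ?_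
  · simpa [Fin.sum_univ_three] using h
  · intro i j hij
    fin_cases i <;> fin_cases j <;>
      simp [mul_comm (legendre₂ a b _) (legendre₁ a b _), sum_legendre₁ hab hℓ,
        sum_legendre₂ hab hℓ, sum_legendre₁_mul_legendre₂ hab hℓ] at hij ⊢
  · intro j
    fin_cases j
    · simpa [hℓ] using (Int.cast_card_Icc hab).le
    · simp [sum_legendre₁_sq hab hℓ]
    · simpa [sum_legendre₂_sq hab hℓ] using hD

theorem refined_jensen_single_general
    (n : ℕ) (R : Matrix (Fin n) (Fin n) ℝ) (hR : R.PosDef)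
    (a b : ℤ) (hab : a < b) (u : ℤ → (Fin n → ℝ)) :
    ∀ (ℓ : ℝ), ℓ = (b : ℝ) - a + 1 →
    ∀ (υ₁ υ₂ υ₃ ζ₁ ζ₂ : Fin n → ℝ),
      υ₁ = ∑ k ∈ Finset.Icc a b, u k →
      υ₂ = ∑ k ∈ Finset.Icc a b, ∑ s ∈ Finset.Icc a k, u s →
      υ₃ = ∑ k ∈ Finset.Icc a b, ∑ s ∈ Finset.Icc a k, ∑ i ∈ Finset.Icc a s, u i →
      ζ₁ = υ₁ - (2 / (ℓ + 1)) • υ₂ →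
      ζ₂ = υ₁ - (6 / (ℓ + 1)) • υ₂ + (12 / ((ℓ + 1) * (ℓ + 2))) • υ₃ →
      ∑ k ∈ Finset.Icc a b, (u k) ⬝ᵥ R.mulVec (u k) - (1 / ℓ) * (υ₁ ⬝ᵥ R.mulVec υ₁) ≥
        (3 * (ℓ + 1) / (ℓ * (ℓ - 1))) * (ζ₁ ⬝ᵥ R.mulVec ζ₁) +
          (5 * (ℓ + 1) * (ℓ + 2) ^ 2 / (ℓ * (ℓ - 1) * (ℓ ^ 2 + 11))) * (ζ₂ ⬝ᵥ R.mulVec ζ₂) := by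
  intro ℓ hℓ υ₁ υ₂ υ₃ ζ₁ ζ₂ h₁ h₂ h₃ h₄ h₅
  have hℓ2 : 2 ≤ ℓ := by
    have : (a : ℝ) + 1 ≤ b := by exact_mod_cast hab
    linarith
  have hζ₁ : ∑ k ∈ Icc a b, legendre₁ a b k • u k = (ℓ + 1) • ζ₁ := by
    rw [sum_legendre₁_smul hℓ, h₄, ← h₁, ← h₂, smul_sub, smul_smul,
      mul_div_cancel₀ _ (by linarith)]
  have hζ₂ : ∑ k ∈ Icc a b, legendre₂ a b k • u k = ((ℓ + 1) * (ℓ + 2)) • ζ₂ := by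
    rw [sum_legendre₂_smul hℓ, h₅, ← h₁, ← h₂, ← h₃, smul_add, smul_sub, smul_smul, smul_smul]
    congr 3 <;> field_simp
  have hbessel := (toBilin' R).sum_legendre_apply_div_le
    (fun x => by simpa [toBilin'_apply'] using hR.posSemidef.dotProduct_mulVec_nonneg x)
    (by omega) hℓ (D := ℓ * (ℓ ^ 2 - 1) * (ℓ ^ 2 + 11) / 5) (by nlinarith) u
  rw [← h₁, hζ₁, hζ₂] at hbessel
  simp only [map_smul, LinearMap.smul_apply, smul_eq_mul, toBilin'_apply'] at hbessel
  have hℓ₁ : ℓ - 1 ≠ 0 := by linarith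
  have hsq : ℓ ^ 2 - 1 = (ℓ - 1) * (ℓ + 1) := by ring
  have e₀ : υ₁ ⬝ᵥ R *ᵥ υ₁ / ℓ = 1 / ℓ * υ₁ ⬝ᵥ R *ᵥ υ₁ := by ring
  have e₁ : (ℓ + 1) * ((ℓ + 1) * ζ₁ ⬝ᵥ R *ᵥ ζ₁) / (ℓ * (ℓ ^ 2 - 1) / 3) =
      3 * (ℓ + 1) / (ℓ * (ℓ - 1)) * ζ₁ ⬝ᵥ R *ᵥ ζ₁ := by
    rw [hsq]; field_simp
  have e₂ : (ℓ + 1) * (ℓ + 2) * ((ℓ + 1) * (ℓ + 2) * ζ₂ ⬝ᵥ R *ᵥ ζ₂) /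
      (ℓ * (ℓ ^ 2 - 1) * (ℓ ^ 2 + 11) / 5) =
      5 * (ℓ + 1) * (ℓ + 2) ^ 2 / (ℓ * (ℓ - 1) * (ℓ ^ 2 + 11)) * ζ₂ ⬝ᵥ R *ᵥ ζ₂ := by
    rw [hsq]; field_simp
  linarith

theorem refined_jensen_single
    (n : ℕ) (R : Matrix (Fin n) (Fin n) ℝ) (hR : R.PosDef) (hRsym : R.IsSymm)
    (a b : ℤ) (hab : a < b) (u : ℤ → (Fin n → ℝ)) :
    ∀ (ℓ : ℝ), ℓ = (b : ℝ) - a + 1 →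
    ∀ (υ₁ υ₂ υ₃ ζ₁ ζ₂ : Fin n → ℝ),
      υ₁ = ∑ k ∈ Finset.Icc a b, u k →
      υ₂ = ∑ k ∈ Finset.Icc a b, ∑ s ∈ Finset.Icc a k, u s →
      υ₃ = ∑ k ∈ Finset.Icc a b, ∑ s ∈ Finset.Icc a k, ∑ i ∈ Finset.Icc a s, u i →
      ζ₁ = υ₁ - (2 / (ℓ + 1)) • υ₂ →
      ζ₂ = υ₁ - (6 / (ℓ + 1)) • υ₂ + (12 / ((ℓ + 1) * (ℓ + 2))) • υ₃ →
      ∑ k ∈ Finset.Icc a b, (u k) ⬝ᵥ R.mulVec (u k) - (1 / ℓ) * (υ₁ ⬝ᵥ R.mulVec υ₁) ≥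
        (3 * (ℓ + 1) / (ℓ * (ℓ - 1))) * (ζ₁ ⬝ᵥ R.mulVec ζ₁) +
          (5 * (ℓ + 1) * (ℓ + 2) ^ 2 / (ℓ * (ℓ - 1) * (ℓ ^ 2 + 11))) * (ζ₂ ⬝ᵥ R.mulVec ζ₂) :=
  refined_jensen_single_general n R hR a b hab u
end
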